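/- arXiv:1602.03713 — 2 statements merged into one kernel-verified Lean document; each statement's English description precedes it below -/
import Mathlib

section
/- Let G=(V,E) be a finite simple graph with positive vertex weights w, let ε>0, set ε'=ε/(2+ε), and let δ be a G-valid edge-weight function. Then for every vertex cover S_OPT of G, the total weight of the set S_δ = {v ∈ V : w(v) − ∑_{e∈E: v∈e} δ(e) ≤ ε'·w(v)} satisfies ∑_{v∈S_δ} w(v) ≤ (2+ε)·∑_{v∈S_OPT} w(v). In particular, if S_δ is itself a vertex cover, it is a (2+ε)-approximation for minimum weight vertex cover. -/
/-!
Every vertex of `S_δ` has at least a `1 - ε' = 2 / (2 + ε)` fraction of its weight paid for by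
the incident edge weights, and summing over `S_δ` counts each edge weight at most twice. On the
other hand, each edge has an endpoint in a vertex cover, so the edge weights in total are paid
for by the cover, and validity bounds that payment by the weight of the cover.
-/

open Finset

section IncidenceSums

variable {α : Type*} [DecidableEq α] (E : Finset (Sym2 α)) (δ : Sym2 α → ℝ)

lemma card_filter_mem_sym2_le_two (S : Finset α) (e : Sym2 α) :
    #(S.filter fun v => v ∈ e) ≤ 2 :=
  calc #(S.filter fun v => v ∈ e)
      ≤ #e.toFinset := card_le_card fun v hv => Sym2.mem_toFinset.2 (mem_filter.1 hv).2
    _ ≤ 2 := by rw [Sym2.card_toFinset]; split_ifs <;> norm_num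

lemma sum_sum_filter_mem_eq_sum_card_mul (S : Finset α) :
    ∑ v ∈ S, ∑ e ∈ E.filter (fun e => v ∈ e), δ e
      = ∑ e ∈ E, (#(S.filter fun v => v ∈ e) : ℝ) * δ e := by
  simp only [sum_filter]
  rw [sum_comm]
  refine sum_congr rfl fun e _ => ?_
  rw [← sum_filter, sum_const, nsmul_eq_mul]

variable {E δ}

lemma sum_sum_filter_mem_le_two_mul (hδ : ∀ e ∈ E, 0 ≤ δ e) (S : Finset α) :
    ∑ v ∈ S, ∑ e ∈ E.filter (fun e => v ∈ e), δ e ≤ 2 * ∑ e ∈ E, δ e := by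
  rw [sum_sum_filter_mem_eq_sum_card_mul, mul_sum]
  refine sum_le_sum fun e he => mul_le_mul_of_nonneg_right ?_ (hδ e he)
  exact_mod_cast card_filter_mem_sym2_le_two S e

lemma sum_le_sum_sum_filter_mem_of_cover (hδ : ∀ e ∈ E, 0 ≤ δ e) {C : Finset α}
    (hC : ∀ e ∈ E, ∃ v ∈ C, v ∈ e) :
    ∑ e ∈ E, δ e ≤ ∑ v ∈ C, ∑ e ∈ E.filter (fun e => v ∈ e), δ e := by
  rw [sum_sum_filter_mem_eq_sum_card_mul]
  refine sum_le_sum fun e he => le_mul_of_one_le_left (hδ e he) ?_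
  obtain ⟨v, hvC, hve⟩ := hC e he
  exact_mod_cast card_pos.2 ⟨v, mem_filter.2 ⟨hvC, hve⟩⟩

end IncidenceSums

theorem stmt_0_general {V : Type*} [Fintype V] [DecidableEq V] (G : SimpleGraph V)
    [DecidableRel G.Adj] (w : V → ℝ)
    (ε : ℝ) (hε : 0 < ε) (ε' : ℝ) (hε' : ε' = ε / (2 + ε))
    (δ : Sym2 V → ℝ) (hδ0 : ∀ e ∈ G.edgeFinset, 0 ≤ δ e)
    (hvalid : ∀ v : V, ∑ e ∈ G.edgeFinset.filter (fun e => v ∈ e), δ e ≤ w v)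
    (Sδ : Finset V)
    (hSδ : ∀ v : V, v ∈ Sδ ↔
      w v - ∑ e ∈ G.edgeFinset.filter (fun e => v ∈ e), δ e ≤ ε' * w v)
    (SOPT : Finset V)
    (hcover : ∀ e ∈ G.edgeFinset, ∃ v ∈ SOPT, v ∈ e) :
    ∑ v ∈ Sδ, w v ≤ (2 + ε) * ∑ v ∈ SOPT, w v := by
  have h_one_sub : 1 - ε' = 2 / (2 + ε) := by
    rw [hε']
    field_simp
    ring
  have hkey : (1 - ε') * ∑ v ∈ Sδ, w v ≤ 2 * ∑ v ∈ SOPT, w v :=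
    calc (1 - ε') * ∑ v ∈ Sδ, w v
        ≤ ∑ v ∈ Sδ, ∑ e ∈ G.edgeFinset.filter (fun e => v ∈ e), δ e := by
          rw [mul_sum]
          exact sum_le_sum fun v hv => by linarith [(hSδ v).1 hv]
      _ ≤ 2 * ∑ e ∈ G.edgeFinset, δ e := sum_sum_filter_mem_le_two_mul hδ0 Sδ
      _ ≤ 2 * ∑ v ∈ SOPT, ∑ e ∈ G.edgeFinset.filter (fun e => v ∈ e), δ e := by
          gcongr
          exact sum_le_sum_sum_filter_mem_of_cover hδ0 hcover
      _ ≤ 2 * ∑ v ∈ SOPT, w v := by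
          gcongr with v
          exact hvalid v
  rw [h_one_sub, div_mul_eq_mul_div, div_le_iff₀ (by positivity)] at hkey
  linarith

/-- Local-ratio template for minimum weight vertex cover: if `δ` is a `G`-valid
edge-weight function, then the total weight of
`S_δ = {v : w v − ∑_{e ∋ v} δ e ≤ ε' · w v}` is at most `(2+ε)` times the weight
of any vertex cover, in particular of a minimum weight vertex cover. -/
theorem stmt_0 {V : Type*} [Fintype V] [DecidableEq V] (G : SimpleGraph V)
    [DecidableRel G.Adj] (w : V → ℝ) (hw : ∀ v, 0 < w v)
    (ε : ℝ) (hε : 0 < ε) (ε' : ℝ) (hε' : ε' = ε / (2 + ε))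
    (δ : Sym2 V → ℝ) (hδ0 : ∀ e ∈ G.edgeFinset, 0 ≤ δ e)
    (hvalid : ∀ v : V, ∑ e ∈ G.edgeFinset.filter (fun e => v ∈ e), δ e ≤ w v)
    (Sδ : Finset V)
    (hSδ : ∀ v : V, v ∈ Sδ ↔
      w v - ∑ e ∈ G.edgeFinset.filter (fun e => v ∈ e), δ e ≤ ε' * w v)
    (SOPT : Finset V)
    (hcover : ∀ e ∈ G.edgeFinset, ∃ v ∈ SOPT, v ∈ e) :
    ∑ v ∈ Sδ, w v ≤ (2 + ε) * ∑ v ∈ SOPT, w v :=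
  stmt_0_general G w ε hε ε' hε' δ hδ0 hvalid Sδ hSδ SOPT hcover
end

section
/- Let G=(V,E) be a finite simple graph with positive vertex weights w, let ε>0, set ε'=ε/(2+ε), and let δ be a G-valid edge-weight function. Then the total weight of the set S_δ = {v ∈ V : w(v) − ∑_{e∈E: v∈e} δ(e) ≤ ε'·w(v)} satisfies ∑_{v∈S_δ} w(v) ≤ (2/(1−ε'))·∑_{e∈E} δ(e). -/
/-!
Each vertex `v ∈ S_δ` has `(1 - ε') w v ≤ ∑_{e ∋ v} δ e`, and summing these over `S_δ` counts each
edge weight at most twice, once for each endpoint, since `δ ≥ 0`. As `ε' < 1`, dividing by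
`1 - ε'` gives the bound.
-/

open Finset

lemma Sym2.card_filter_mem_le_two {V : Type*} [DecidableEq V] (s : Finset V) (e : Sym2 V) :
    #{v ∈ s | v ∈ e} ≤ 2 :=
  calc #{v ∈ s | v ∈ e} ≤ #e.toFinset :=
        card_le_card fun v hv => Sym2.mem_toFinset.mpr (mem_filter.mp hv).2
    _ ≤ 2 := by rw [Sym2.card_toFinset]; split_ifs <;> omega

lemma sum_sum_incident_le_two_mul {V : Type*} [DecidableEq V] (s : Finset V)
    (E : Finset (Sym2 V)) (δ : Sym2 V → ℝ) (hδ : ∀ e ∈ E, 0 ≤ δ e) :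
    ∑ v ∈ s, ∑ e ∈ E with v ∈ e, δ e ≤ 2 * ∑ e ∈ E, δ e := by
  have double_count : ∑ v ∈ s, ∑ e ∈ E with v ∈ e, δ e = ∑ e ∈ E, #{v ∈ s | v ∈ e} * δ e := by
    simp_rw [sum_filter]
    rw [sum_comm]
    refine sum_congr rfl fun e _ => ?_
    rw [← sum_filter, sum_const, nsmul_eq_mul]
  rw [double_count, mul_sum]
  refine sum_le_sum fun e he => mul_le_mul_of_nonneg_right ?_ (hδ e he)
  exact_mod_cast Sym2.card_filter_mem_le_two s e

theorem stmt_4_general {V : Type*} [Fintype V] [DecidableEq V] (G : SimpleGraph V)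
    [DecidableRel G.Adj] (w : V → ℝ)
    (ε : ℝ) (hε : 0 < ε) (ε' : ℝ) (hε' : ε' = ε / (2 + ε))
    (δ : Sym2 V → ℝ) (hδ0 : ∀ e ∈ G.edgeFinset, 0 ≤ δ e)
    (Sδ : Finset V)
    (hSδ : ∀ v : V, v ∈ Sδ ↔
      w v - ∑ e ∈ G.edgeFinset.filter (fun e => v ∈ e), δ e ≤ ε' * w v) :
    ∑ v ∈ Sδ, w v ≤ (2 / (1 - ε')) * ∑ e ∈ G.edgeFinset, δ e := by
  have hε'_lt_one : ε' < 1 := by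
    rw [hε', div_lt_one (by linarith)]
    linarith
  have slack_le_load : (1 - ε') * ∑ v ∈ Sδ, w v ≤
      ∑ v ∈ Sδ, ∑ e ∈ G.edgeFinset with v ∈ e, δ e := by
    rw [mul_sum]
    exact sum_le_sum fun v hv => by linarith [(hSδ v).mp hv]
  rw [div_mul_eq_mul_div, le_div_iff₀ (by linarith)]
  linarith [sum_sum_incident_le_two_mul Sδ G.edgeFinset δ hδ0]

/-- For a `G`-valid edge-weight function `δ`, the total weight of
`S_δ = {v : w v − ∑_{e ∋ v} δ e ≤ ε' · w v}` is at most
`(2/(1−ε')) · ∑_{e ∈ E} δ e`. -/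
theorem stmt_4 {V : Type*} [Fintype V] [DecidableEq V] (G : SimpleGraph V)
    [DecidableRel G.Adj] (w : V → ℝ) (hw : ∀ v, 0 < w v)
    (ε : ℝ) (hε : 0 < ε) (ε' : ℝ) (hε' : ε' = ε / (2 + ε))
    (δ : Sym2 V → ℝ) (hδ0 : ∀ e ∈ G.edgeFinset, 0 ≤ δ e)
    (hvalid : ∀ v : V, ∑ e ∈ G.edgeFinset.filter (fun e => v ∈ e), δ e ≤ w v)
    (Sδ : Finset V)
    (hSδ : ∀ v : V, v ∈ Sδ ↔
      w v - ∑ e ∈ G.edgeFinset.filter (fun e => v ∈ e), δ e ≤ ε' * w v) :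
    ∑ v ∈ Sδ, w v ≤ (2 / (1 - ε')) * ∑ e ∈ G.edgeFinset, δ e :=
  stmt_4_general G w ε hε ε' hε' δ hδ0 Sδ hSδ
end
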